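/- Let n be a natural number and a, b, c, d real numbers such that all Pochhammer symbols (c)_k, (d)_k, (1−a−n)_k, (1−b−n)_k are nonzero for 0 ≤ k ≤ n. Then ∑_{k=0}^n [(−n)_k (a)_k (b)_k]/[(c)_k (d)_k k!] = (−1)^n [(a)_n (b)_n]/[(c)_n (d)_n] · ∑_{k=0}^n [(−n)_k (1−c−n)_k (1−d−n)_k]/[(1−a−n)_k (1−b−n)_k k!]. -/

import Mathlib

/-!
Split `(x)_n = (x)_m (x+m)_k` for `n = m + k` and reflect the second factor,
`(x+m)_k = (-1)^k (1-x-n)_k`; together with `(-n)_k / k! = (-1)^k C(n,k)` this matches the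
`m`-th term of the left-hand series with the `k`-th term of the right-hand one, term by term.
-/

/-- The Pochhammer symbol `(a)_k = a (a+1) ⋯ (a+k-1)` over ℝ. -/
noncomputable def poch (a : ℝ) (k : ℕ) : ℝ := (ascPochhammer ℝ k).eval a

noncomputable def term3F2 (a₁ a₂ a₃ b₁ b₂ : ℝ) (k : ℕ) : ℝ :=
  poch a₁ k * poch a₂ k * poch a₃ k / (poch b₁ k * poch b₂ k * k.factorial)

open Polynomial Nat

lemma poch_add (x : ℝ) (m k : ℕ) : poch x (m + k) = poch x m * poch (x + m) k := by
  simp [poch, ← ascPochhammer_mul, eval_comp]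

lemma poch_one_sub_sub (x : ℝ) (k : ℕ) : poch (1 - x - k) k = (-1) ^ k * poch x k := by
  rw [poch, show 1 - x - k = -(x + k - 1) by ring, ascPochhammer_eval_neg_eq_descPochhammer,
    descPochhammer_eval_eq_ascPochhammer, poch]
  ring_nf

lemma poch_neg_natCast (n k : ℕ) : poch (-n) k = (-1) ^ k * k ! * n.choose k := by
  rw [poch, ascPochhammer_eval_neg_eq_descPochhammer, descPochhammer_eval_eq_descFactorial,
    descFactorial_eq_factorial_mul_choose]
  push_cast
  ring

lemma poch_eq_mul_poch_one_sub_sub (x : ℝ) {m k n : ℕ} (hn : m + k = n) :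
    poch x n = (-1) ^ k * poch x m * poch (1 - x - n) k := by
  subst hn
  rw [poch_add, show 1 - x - ((m + k : ℕ) : ℝ) = 1 - (x + m) - k by push_cast; ring,
    poch_one_sub_sub]
  linear_combination -(poch x m * poch (x + m) k) *
    pow_mul_pow_eq_one k (by norm_num : (-1 : ℝ) * -1 = 1)

lemma term3F2_eq_reflected_term3F2 (a b c d : ℝ) {m k n : ℕ} (hn : m + k = n)
    (hc : poch c m ≠ 0) (hd : poch d m ≠ 0) (hcn : poch c n ≠ 0) (hdn : poch d n ≠ 0)
    (ha : poch (1 - a - n) k ≠ 0) (hb : poch (1 - b - n) k ≠ 0) :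
    term3F2 (-n) a b c d m =
      (-1) ^ n * (poch a n * poch b n) / (poch c n * poch d n) *
        term3F2 (-n) (1 - c - n) (1 - d - n) (1 - a - n) (1 - b - n) k := by
  subst hn
  unfold term3F2
  rw [poch_eq_mul_poch_one_sub_sub c rfl] at hcn ⊢
  rw [poch_eq_mul_poch_one_sub_sub d rfl] at hdn ⊢
  have hc' := right_ne_zero_of_mul hcn
  have hd' := right_ne_zero_of_mul hdn
  rw [poch_eq_mul_poch_one_sub_sub a rfl, poch_eq_mul_poch_one_sub_sub b rfl,
    poch_neg_natCast, poch_neg_natCast, choose_symm_add]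
  field_simp
  rw [pow_add]
  linear_combination -(((m + k).choose k : ℝ) * poch a m * poch b m * (-1) ^ m) *
    pow_mul_pow_eq_one k (by norm_num : (-1 : ℝ) * -1 = 1)

theorem thomae_A4 (n : ℕ) (a b c d : ℝ)
    (hc : ∀ k ≤ n, poch c k ≠ 0) (hd : ∀ k ≤ n, poch d k ≠ 0)
    (h1 : ∀ k ≤ n, poch (1 - a - n) k ≠ 0)
    (h2 : ∀ k ≤ n, poch (1 - b - n) k ≠ 0) :
    ∑ k ∈ Finset.range (n + 1),
        (poch (-(n : ℝ)) k * poch a k * poch b k) /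
          (poch c k * poch d k * (k.factorial : ℝ)) =
      (-1 : ℝ) ^ n * (poch a n * poch b n) / (poch c n * poch d n) *
        ∑ k ∈ Finset.range (n + 1),
          (poch (-(n : ℝ)) k * poch (1 - c - n) k * poch (1 - d - n) k) /
            (poch (1 - a - n) k * poch (1 - b - n) k * (k.factorial : ℝ)) := by
  rw [Finset.mul_sum]
  conv_rhs => rw [← Finset.sum_range_reflect]
  refine Finset.sum_congr rfl fun m hm => ?_
  obtain ⟨k, hn⟩ := Nat.exists_eq_add_of_le (Finset.mem_range_succ_iff.mp hm)
  rw [show n + 1 - 1 - m = k by omega]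
  exact term3F2_eq_reflected_term3F2 a b c d hn.symm (hc m (by omega)) (hd m (by omega))
    (hc n le_rfl) (hd n le_rfl) (h1 k (by omega)) (h2 k (by omega))
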